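/- Let X be a complex Banach space, 0 < ε < π/2, λ₀ > 0, σ ∈ (0, 2), and N₊, N₋ ≥ 0. Let F : ℂ → X be holomorphic on the open set {λ ∈ Σ_ε : |λ| > λ₀} and satisfy ‖F(λ)‖ ≤ N₊ |λ|^{−σ/2} there. Let γ > 0 with γ sin ε > λ₀, and for t > 0 set I(t) := (1/(2πi)) ∫_0^∞ ( e^{λ₊(r)t} e^{i(π−ε)} F(λ₊(r)) − e^{λ₋(r)t} e^{−i(π−ε)} F(λ₋(r)) ) dr, with λ_±(r) = γ + r e^{±i(π−ε)}. Then: (i) there is a constant C₁ depending only on ε and σ such that ‖I(t)‖ ≤ C₁ N₊ e^{γt} t^{−(1−σ/2)} for all t > 0; and (ii) if in addition ‖F'(λ)‖ ≤ N₋ |λ|^{−(1−σ/2)} on the same set, then there is a constant C₂ depending only on ε and σ such that ‖I(t)‖ ≤ C₂ N₋ e^{γt} t^{−(1+σ/2)} for all t > 0. -/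

import Mathlib

open MeasureTheory

/-- The point `λ₊(r) = γ + r e^{i(π−ε)}` on the upper ray of the shifted sector contour. -/
noncomputable def lamP (γ ε r : ℝ) : ℂ :=
  (γ : ℂ) + (r : ℂ) * Complex.exp (Complex.I * ((Real.pi - ε : ℝ) : ℂ))

/-- The point `λ₋(r) = γ + r e^{−i(π−ε)}` on the lower ray of the shifted sector contour. -/
noncomputable def lamM (γ ε r : ℝ) : ℂ :=
  (γ : ℂ) + (r : ℂ) * Complex.exp (-(Complex.I * ((Real.pi - ε : ℝ) : ℂ)))

/-- The integrand `e^{λ₊(r)t} e^{i(π−ε)} F(λ₊(r)) − e^{λ₋(r)t} e^{−i(π−ε)} F(λ₋(r))`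
of the inverse Laplace transform on the shifted sector contour. -/
noncomputable def sectorIntegrand {X : Type*} [NormedAddCommGroup X] [NormedSpace ℂ X]
    (F : ℂ → X) (γ ε t r : ℝ) : X :=
  (Complex.exp (lamP γ ε r * (t : ℂ)) * Complex.exp (Complex.I * ((Real.pi - ε : ℝ) : ℂ))) •
      F (lamP γ ε r) -
    (Complex.exp (lamM γ ε r * (t : ℂ)) *
        Complex.exp (-(Complex.I * ((Real.pi - ε : ℝ) : ℂ)))) •
      F (lamM γ ε r)

/-- The inverse Laplace transform `I(t) = (1/(2πi)) ∫_0^∞ (…) dr` realized on the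
shifted sector contour. -/
noncomputable def sectorInvLaplace {X : Type*} [NormedAddCommGroup X] [NormedSpace ℂ X]
    (F : ℂ → X) (γ ε t : ℝ) : X :=
  (2 * (Real.pi : ℂ) * Complex.I)⁻¹ • ∫ r in Set.Ioi (0 : ℝ), sectorIntegrand F γ ε t r


open Set

lemma expI_eq (ε : ℝ) : Complex.exp (Complex.I * ((Real.pi - ε : ℝ) : ℂ)) =
    Complex.ofReal (Real.cos (Real.pi - ε)) + Complex.ofReal (Real.sin (Real.pi - ε)) * Complex.I := by
  rw [mul_comm, Complex.exp_mul_I, Complex.ofReal_cos, Complex.ofReal_sin]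

lemma lamP_re (γ ε r : ℝ) : (lamP γ ε r).re = γ - r * Real.cos ε := by
  rw [lamP, expI_eq]
  simp [Real.cos_pi_sub, Complex.cos_ofReal_re]
  ring

lemma lamP_im (γ ε r : ℝ) : (lamP γ ε r).im = r * Real.sin ε := by
  rw [lamP, expI_eq]
  simp [Real.sin_pi_sub, Complex.sin_ofReal_re]

lemma lamM_eq_conj (γ ε r : ℝ) : lamM γ ε r = (starRingEnd ℂ) (lamP γ ε r) := by
  simp only [lamM, lamP, map_add, map_mul, ← Complex.exp_conj, Complex.conj_ofReal, map_mul,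
    Complex.conj_I]
  ring_nf

section
variable {γ ε r l₀ : ℝ}

lemma lamP_abs_sq (γ ε r : ℝ) :
    ‖lamP γ ε r‖ ^ 2 = (γ - r * Real.cos ε) ^ 2 + (r * Real.sin ε) ^ 2 := by
  rw [Complex.sq_norm, Complex.normSq_apply, lamP_re, lamP_im]; ring

lemma lamP_abs_ge_r (hε0 : 0 < ε) (hε1 : ε < Real.pi / 2) (hr : 0 ≤ r) :
    r * Real.sin ε ≤ ‖lamP γ ε r‖ := by
  have h := Complex.abs_im_le_norm (lamP γ ε r)
  rw [lamP_im] at h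
  have hs : 0 ≤ Real.sin ε := Real.sin_nonneg_of_nonneg_of_le_pi hε0.le (by linarith [Real.pi_pos])
  calc r * Real.sin ε ≤ |r * Real.sin ε| := le_abs_self _
    _ ≤ _ := h

lemma lamP_abs_ge_gamma (hε0 : 0 < ε) (hε1 : ε < Real.pi / 2) (hγ : 0 < γ) (hr : 0 ≤ r) :
    γ * Real.sin ε ≤ ‖lamP γ ε r‖ := by
  have h2 := lamP_abs_sq γ ε r
  have h3 : 0 ≤ ‖lamP γ ε r‖ := (norm_nonneg _)
  have hsc := Real.sin_sq_add_cos_sq ε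
  have hs : 0 < Real.sin ε := Real.sin_pos_of_pos_of_lt_pi hε0 (by linarith [Real.pi_pos])
  have expand : ‖lamP γ ε r‖ ^ 2 - (γ * Real.sin ε) ^ 2
      = (γ * Real.cos ε - r) ^ 2 := by
    rw [h2]; linear_combination (r ^ 2 - γ ^ 2) * hsc
  have key : (γ * Real.sin ε) ^ 2 ≤ ‖lamP γ ε r‖ ^ 2 := by
    nlinarith [sq_nonneg (γ * Real.cos ε - r), expand]
  calc γ * Real.sin ε = Real.sqrt ((γ * Real.sin ε) ^ 2) := by
        rw [Real.sqrt_sq (by positivity)]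
    _ ≤ Real.sqrt (‖lamP γ ε r‖ ^ 2) := Real.sqrt_le_sqrt key
    _ = _ := Real.sqrt_sq h3

lemma lamP_abs_pos (hε0 : 0 < ε) (hε1 : ε < Real.pi / 2) (hγ : 0 < γ) (hr : 0 ≤ r) :
    0 < ‖lamP γ ε r‖ := by
  have hs : 0 < Real.sin ε := Real.sin_pos_of_pos_of_lt_pi hε0 (by linarith [Real.pi_pos])
  calc (0:ℝ) < γ * Real.sin ε := mul_pos hγ hs
    _ ≤ _ := lamP_abs_ge_gamma hε0 hε1 hγ hr

lemma lamP_ne_zero (hε0 : 0 < ε) (hε1 : ε < Real.pi / 2) (hγ : 0 < γ) (hr : 0 ≤ r) :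
    lamP γ ε r ≠ 0 := by
  intro h
  have := lamP_abs_pos (γ := γ) (r := r) hε0 hε1 hγ hr
  rw [h] at this; simp at this

lemma lamP_arg (hε0 : 0 < ε) (hε1 : ε < Real.pi / 2) (hγ : 0 < γ) (hr : 0 ≤ r) :
    |Complex.arg (lamP γ ε r)| ≤ Real.pi - ε := by
  set z := lamP γ ε r with hz
  have hz0 : z ≠ 0 := lamP_ne_zero hε0 hε1 hγ hr
  have hpi := Real.pi_pos
  have hc : 0 < Real.cos ε := Real.cos_pos_of_mem_Ioo ⟨by linarith, hε1⟩
  have hs : 0 < Real.sin ε := Real.sin_pos_of_pos_of_lt_pi hε0 (by linarith)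
  have hc1 : Real.cos ε ^ 2 < 1 := by
    nlinarith [Real.sin_sq_add_cos_sq ε, mul_pos hs hs]
  have harg0 : 0 ≤ z.arg := Complex.arg_nonneg_iff.2 (by rw [hz, lamP_im]; positivity)
  have hargpi : z.arg ≤ Real.pi := Complex.arg_le_pi z
  -- |z| > r - γ cos ε
  have habs2 := lamP_abs_sq γ ε r
  have habs0 := lamP_abs_pos hε0 hε1 hγ hr
  rw [← hz] at habs2
  have hkey : r - γ * Real.cos ε < ‖z‖ := by
    have expand2 : ‖z‖ ^ 2 - (r - γ * Real.cos ε) ^ 2 = (γ * Real.sin ε) ^ 2 := by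
      rw [habs2]; linear_combination (r ^ 2 - γ ^ 2) * Real.sin_sq_add_cos_sq ε
    have hpos : (0:ℝ) < (γ * Real.sin ε) ^ 2 := by positivity
    have hlt : (r - γ * Real.cos ε) ^ 2 < ‖z‖ ^ 2 := by linarith
    calc r - γ * Real.cos ε ≤ Real.sqrt ((r - γ * Real.cos ε) ^ 2) := by
          rw [Real.sqrt_sq_eq_abs]; exact le_abs_self _
      _ < Real.sqrt (‖z‖ ^ 2) := by
          exact Real.sqrt_lt_sqrt (sq_nonneg _) hlt
      _ = _ := Real.sqrt_sq habs0.le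
  -- cos (arg z) > cos (π - ε)
  have hcos : Real.cos (Real.pi - ε) < Real.cos z.arg := by
    rw [Complex.cos_arg hz0, Real.cos_pi_sub]
    rw [lt_div_iff₀ (by rw [← hz] at habs0; exact habs0)]
    have hre : z.re = γ - r * Real.cos ε := lamP_re γ ε r
    rw [hre]
    nlinarith [mul_lt_mul_of_pos_left hkey hc]
  by_contra hcon
  push_neg at hcon
  rw [abs_of_nonneg harg0] at hcon
  have := Real.strictAntiOn_cos ⟨by linarith, by linarith⟩ ⟨harg0, hargpi⟩ hcon
  linarith

lemma lamM_abs (γ ε r : ℝ) : ‖lamM γ ε r‖ = ‖lamP γ ε r‖ := by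
  rw [lamM_eq_conj]; exact Complex.norm_conj _

lemma lamM_arg (hε0 : 0 < ε) (hε1 : ε < Real.pi / 2) (hγ : 0 < γ) (hr : 0 ≤ r) :
    |Complex.arg (lamM γ ε r)| ≤ Real.pi - ε := by
  have h := lamP_arg (γ := γ) (r := r) hε0 hε1 hγ hr
  have hpi := Real.pi_pos
  have hne : (lamP γ ε r).arg ≠ Real.pi := by
    intro hcon
    rw [hcon] at h
    have : Real.pi ≤ Real.pi - ε := le_trans (le_abs_self _) h
    linarith
  rw [lamM_eq_conj, Complex.arg_conj, if_neg hne, abs_neg]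
  exact h

lemma lamM_ne_zero (hε0 : 0 < ε) (hε1 : ε < Real.pi / 2) (hγ : 0 < γ) (hr : 0 ≤ r) :
    lamM γ ε r ≠ 0 := by
  intro h
  have := lamP_abs_pos (γ := γ) (r := r) hε0 hε1 hγ hr
  rw [← lamM_abs, h] at this; simp at this

end

section
variable {γ ε r l₀ t : ℝ}

lemma lamM_re (γ ε r : ℝ) : (lamM γ ε r).re = γ - r * Real.cos ε := by
  rw [lamM_eq_conj, Complex.conj_re, lamP_re]

lemma norm_exp_lamP (γ ε r t : ℝ) :
    ‖Complex.exp (lamP γ ε r * (t : ℂ))‖ = Real.exp ((γ - r * Real.cos ε) * t) := by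
  rw [Complex.norm_exp]
  congr 1
  simp [Complex.mul_re, lamP_re]

lemma norm_exp_lamM (γ ε r t : ℝ) :
    ‖Complex.exp (lamM γ ε r * (t : ℂ))‖ = Real.exp ((γ - r * Real.cos ε) * t) := by
  rw [Complex.norm_exp]
  congr 1
  simp [Complex.mul_re, lamM_re]

lemma norm_exp_I_theta (ε : ℝ) : ‖Complex.exp (Complex.I * ((Real.pi - ε : ℝ) : ℂ))‖ = 1 := by
  rw [Complex.norm_exp]
  simp [Complex.mul_re]

lemma norm_exp_neg_I_theta (ε : ℝ) :
    ‖Complex.exp (-(Complex.I * ((Real.pi - ε : ℝ) : ℂ)))‖ = 1 := by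
  rw [Complex.norm_exp]
  simp [Complex.mul_re]

/-- generic decay bound along the upper ray -/
lemma norm_along_lamP {X : Type*} [NormedAddCommGroup X] {G : ℂ → X} {a N : ℝ}
    (hε0 : 0 < ε) (hε1 : ε < Real.pi / 2) (ha : 0 < a) (hN : 0 ≤ N) (hγ : 0 < γ)
    (hl : l₀ < γ * Real.sin ε)
    (hbd : ∀ z : ℂ, z ≠ 0 → |Complex.arg z| ≤ Real.pi - ε → l₀ < ‖z‖ →
      ‖G z‖ ≤ N * ‖z‖ ^ (-a))
    (hr : 0 < r) :
    ‖G (lamP γ ε r)‖ ≤ N * Real.sin ε ^ (-a) * r ^ (-a) := by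
  have hs : 0 < Real.sin ε := Real.sin_pos_of_pos_of_lt_pi hε0 (by linarith [Real.pi_pos])
  have hmem := lamP_abs_ge_gamma (γ := γ) (r := r) hε0 hε1 hγ hr.le
  have h1 := hbd _ (lamP_ne_zero hε0 hε1 hγ hr.le) (lamP_arg hε0 hε1 hγ hr.le)
    (lt_of_lt_of_le hl hmem)
  refine h1.trans ?_
  rw [mul_assoc, ← Real.mul_rpow hs.le hr.le]
  refine mul_le_mul_of_nonneg_left ?_ hN
  refine Real.rpow_le_rpow_of_nonpos (by positivity) ?_ (by linarith)
  rw [mul_comm]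
  exact lamP_abs_ge_r hε0 hε1 hr.le

lemma norm_along_lamM {X : Type*} [NormedAddCommGroup X] {G : ℂ → X} {a N : ℝ}
    (hε0 : 0 < ε) (hε1 : ε < Real.pi / 2) (ha : 0 < a) (hN : 0 ≤ N) (hγ : 0 < γ)
    (hl : l₀ < γ * Real.sin ε)
    (hbd : ∀ z : ℂ, z ≠ 0 → |Complex.arg z| ≤ Real.pi - ε → l₀ < ‖z‖ →
      ‖G z‖ ≤ N * ‖z‖ ^ (-a))
    (hr : 0 < r) :
    ‖G (lamM γ ε r)‖ ≤ N * Real.sin ε ^ (-a) * r ^ (-a) := by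
  have hs : 0 < Real.sin ε := Real.sin_pos_of_pos_of_lt_pi hε0 (by linarith [Real.pi_pos])
  have hmem := lamP_abs_ge_gamma (γ := γ) (r := r) hε0 hε1 hγ hr.le
  have h1 := hbd _ (lamM_ne_zero hε0 hε1 hγ hr.le) (lamM_arg hε0 hε1 hγ hr.le)
    (by rw [lamM_abs]; exact lt_of_lt_of_le hl hmem)
  refine h1.trans ?_
  rw [mul_assoc, ← Real.mul_rpow hs.le hr.le, lamM_abs]
  refine mul_le_mul_of_nonneg_left ?_ hN
  refine Real.rpow_le_rpow_of_nonpos (by positivity) ?_ (by linarith)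
  rw [mul_comm]
  exact lamP_abs_ge_r hε0 hε1 hr.le

end

lemma integrableOn_aux {q b : ℝ} (hq : -1 < q) (hb : 0 < b) :
    IntegrableOn (fun x : ℝ => x ^ q * Real.exp (-b * x)) (Ioi 0) := by
  have h := integrableOn_rpow_mul_exp_neg_mul_rpow hq zero_lt_one hb
  simpa only [Real.rpow_one] using h

lemma integral_aux {q b : ℝ} (hq : -1 < q) (hb : 0 < b) :
    ∫ x in Ioi (0:ℝ), x ^ q * Real.exp (-b * x) = b ^ (-(q+1)) * Real.Gamma (q+1) := by
  have h := integral_rpow_mul_exp_neg_mul_rpow (by norm_num : (0:ℝ) < 1) hq hb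
  simp only [Real.rpow_one, div_one, one_div] at h
  rw [h]; ring

section
variable {γ ε t l₀ : ℝ} {X : Type*} [NormedAddCommGroup X] [NormedSpace ℂ X]

lemma continuous_lamP (γ ε : ℝ) : Continuous (lamP γ ε) :=
  continuous_const.add (Complex.continuous_ofReal.mul continuous_const)

lemma continuous_lamM (γ ε : ℝ) : Continuous (lamM γ ε) :=
  continuous_const.add (Complex.continuous_ofReal.mul continuous_const)

lemma sectorIntegrand_norm_le {G : ℂ → X} {a N r : ℝ}
    (hε0 : 0 < ε) (hε1 : ε < Real.pi / 2) (ha : 0 < a) (hN : 0 ≤ N) (hγ : 0 < γ)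
    (hl : l₀ < γ * Real.sin ε)
    (hbd : ∀ z : ℂ, z ≠ 0 → |Complex.arg z| ≤ Real.pi - ε → l₀ < ‖z‖ →
      ‖G z‖ ≤ N * ‖z‖ ^ (-a))
    (hr : 0 < r) :
    ‖sectorIntegrand G γ ε t r‖ ≤
      2 * N * Real.sin ε ^ (-a) * Real.exp (γ * t) *
        (r ^ (-a) * Real.exp (-(Real.cos ε * t) * r)) := by
  have hP := norm_along_lamP hε0 hε1 ha hN hγ hl hbd hr
  have hM := norm_along_lamM hε0 hε1 ha hN hγ hl hbd hr
  have hsplit : Real.exp ((γ - r * Real.cos ε) * t) =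
      Real.exp (γ * t) * Real.exp (-(Real.cos ε * t) * r) := by
    rw [← Real.exp_add]; ring_nf
  calc ‖sectorIntegrand G γ ε t r‖
      ≤ ‖(Complex.exp (lamP γ ε r * (t : ℂ)) *
            Complex.exp (Complex.I * ((Real.pi - ε : ℝ) : ℂ))) • G (lamP γ ε r)‖ +
        ‖(Complex.exp (lamM γ ε r * (t : ℂ)) *
            Complex.exp (-(Complex.I * ((Real.pi - ε : ℝ) : ℂ)))) • G (lamM γ ε r)‖ :=
        norm_sub_le _ _
    _ ≤ Real.exp ((γ - r * Real.cos ε) * t) * (N * Real.sin ε ^ (-a) * r ^ (-a)) +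
        Real.exp ((γ - r * Real.cos ε) * t) * (N * Real.sin ε ^ (-a) * r ^ (-a)) := by
        gcongr
        · rw [norm_smul, norm_mul, norm_exp_lamP, norm_exp_I_theta, mul_one]
          exact mul_le_mul_of_nonneg_left hP (Real.exp_nonneg _)
        · rw [norm_smul, norm_mul, norm_exp_lamM, norm_exp_neg_I_theta, mul_one]
          exact mul_le_mul_of_nonneg_left hM (Real.exp_nonneg _)
    _ = 2 * N * Real.sin ε ^ (-a) * Real.exp (γ * t) *
        (r ^ (-a) * Real.exp (-(Real.cos ε * t) * r)) := by
        rw [hsplit]; ring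

lemma sectorIntegrand_continuousOn {G : ℂ → X}
    (hG : ∀ r ∈ Ici (0:ℝ), ContinuousAt G (lamP γ ε r) ∧ ContinuousAt G (lamM γ ε r)) :
    ContinuousOn (sectorIntegrand G γ ε t) (Ici 0) := by
  intro r hr
  apply ContinuousAt.continuousWithinAt
  have h1 : ContinuousAt (fun x : ℝ => Complex.exp (lamP γ ε x * (t : ℂ))) r :=
    (Complex.continuous_exp.comp ((continuous_lamP γ ε).mul continuous_const)).continuousAt
  have h2 : ContinuousAt (fun x : ℝ => Complex.exp (lamM γ ε x * (t : ℂ))) r :=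
    (Complex.continuous_exp.comp ((continuous_lamM γ ε).mul continuous_const)).continuousAt
  have hGP : ContinuousAt (fun x : ℝ => G (lamP γ ε x)) r :=
    (hG r hr).1.comp (continuous_lamP γ ε).continuousAt
  have hGM : ContinuousAt (fun x : ℝ => G (lamM γ ε x)) r :=
    (hG r hr).2.comp (continuous_lamM γ ε).continuousAt
  exact ((h1.mul continuousAt_const).smul hGP).sub ((h2.mul continuousAt_const).smul hGM)

lemma sectorIntegrand_integrableOn {G : ℂ → X} {a N : ℝ}
    (hε0 : 0 < ε) (hε1 : ε < Real.pi / 2) (ha : 0 < a) (ha1 : a < 1) (hN : 0 ≤ N)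
    (hγ : 0 < γ) (hl : l₀ < γ * Real.sin ε) (ht : 0 < t)
    (hG : ∀ r ∈ Ici (0:ℝ), ContinuousAt G (lamP γ ε r) ∧ ContinuousAt G (lamM γ ε r))
    (hbd : ∀ z : ℂ, z ≠ 0 → |Complex.arg z| ≤ Real.pi - ε → l₀ < ‖z‖ →
      ‖G z‖ ≤ N * ‖z‖ ^ (-a)) :
    IntegrableOn (sectorIntegrand G γ ε t) (Ioi 0) := by
  have hc : 0 < Real.cos ε := Real.cos_pos_of_mem_Ioo ⟨by linarith [Real.pi_pos], hε1⟩
  have hct : 0 < Real.cos ε * t := mul_pos hc ht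
  have hbound : IntegrableOn (fun r : ℝ => 2 * N * Real.sin ε ^ (-a) * Real.exp (γ * t) *
      (r ^ (-a) * Real.exp (-(Real.cos ε * t) * r))) (Ioi 0) :=
    (integrableOn_aux (by linarith) hct).const_mul _
  refine Integrable.mono' hbound ?_ ?_
  · exact ((sectorIntegrand_continuousOn hG).mono Ioi_subset_Ici_self).aestronglyMeasurable
      measurableSet_Ioi
  · filter_upwards [ae_restrict_mem measurableSet_Ioi] with r hr
    exact sectorIntegrand_norm_le hε0 hε1 ha hN hγ hl hbd hr

lemma sectorIntegral_norm_le {G : ℂ → X} {a N : ℝ}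
    (hε0 : 0 < ε) (hε1 : ε < Real.pi / 2) (ha : 0 < a) (ha1 : a < 1) (hN : 0 ≤ N)
    (hγ : 0 < γ) (hl : l₀ < γ * Real.sin ε) (ht : 0 < t)
    (hG : ∀ r ∈ Ici (0:ℝ), ContinuousAt G (lamP γ ε r) ∧ ContinuousAt G (lamM γ ε r))
    (hbd : ∀ z : ℂ, z ≠ 0 → |Complex.arg z| ≤ Real.pi - ε → l₀ < ‖z‖ →
      ‖G z‖ ≤ N * ‖z‖ ^ (-a)) :
    ‖∫ r in Ioi (0:ℝ), sectorIntegrand G γ ε t r‖ ≤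
      2 * N * Real.sin ε ^ (-a) * Real.exp (γ * t) *
        ((Real.cos ε * t) ^ (a - 1) * Real.Gamma (1 - a)) := by
  have hc : 0 < Real.cos ε := Real.cos_pos_of_mem_Ioo ⟨by linarith [Real.pi_pos], hε1⟩
  have hct : 0 < Real.cos ε * t := mul_pos hc ht
  have hint : IntegrableOn (fun r : ℝ => 2 * N * Real.sin ε ^ (-a) * Real.exp (γ * t) *
      (r ^ (-a) * Real.exp (-(Real.cos ε * t) * r))) (Ioi 0) :=
    (integrableOn_aux (by linarith) hct).const_mul _
  have h1 : ‖∫ r in Ioi (0:ℝ), sectorIntegrand G γ ε t r‖ ≤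
      ∫ r in Ioi (0:ℝ), 2 * N * Real.sin ε ^ (-a) * Real.exp (γ * t) *
        (r ^ (-a) * Real.exp (-(Real.cos ε * t) * r)) := by
    refine norm_integral_le_of_norm_le hint ?_
    filter_upwards [ae_restrict_mem measurableSet_Ioi] with r hr
    exact sectorIntegrand_norm_le hε0 hε1 ha hN hγ hl hbd hr
  refine h1.trans_eq ?_
  rw [MeasureTheory.integral_const_mul, integral_aux (by linarith) hct]
  have : -(-a + 1) = a - 1 := by ring
  rw [show -a + 1 = 1 - a by ring] at *
  rw [show -(1 - a) = a - 1 by ring]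

end

section
variable {γ ε r l₀ t : ℝ} {X : Type*} [NormedAddCommGroup X] [NormedSpace ℂ X]

lemma lamP_arg_lt (hε0 : 0 < ε) (hε1 : ε < Real.pi / 2) (hγ : 0 < γ) (hr : 0 ≤ r) :
    |Complex.arg (lamP γ ε r)| < Real.pi - ε := by
  set z := lamP γ ε r with hz
  have hz0 : z ≠ 0 := lamP_ne_zero hε0 hε1 hγ hr
  have hpi := Real.pi_pos
  have hc : 0 < Real.cos ε := Real.cos_pos_of_mem_Ioo ⟨by linarith, hε1⟩
  have hs : 0 < Real.sin ε := Real.sin_pos_of_pos_of_lt_pi hε0 (by linarith)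
  have hc1 : Real.cos ε ^ 2 < 1 := by
    nlinarith [Real.sin_sq_add_cos_sq ε, mul_pos hs hs]
  have harg0 : 0 ≤ z.arg := Complex.arg_nonneg_iff.2 (by rw [hz, lamP_im]; positivity)
  have hargpi : z.arg ≤ Real.pi := Complex.arg_le_pi z
  have habs2 := lamP_abs_sq γ ε r
  have habs0 := lamP_abs_pos hε0 hε1 hγ hr
  rw [← hz] at habs2
  have hkey : r - γ * Real.cos ε < ‖z‖ := by
    have expand2 : ‖z‖ ^ 2 - (r - γ * Real.cos ε) ^ 2 = (γ * Real.sin ε) ^ 2 := by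
      rw [habs2]; linear_combination (r ^ 2 - γ ^ 2) * Real.sin_sq_add_cos_sq ε
    have hpos : (0:ℝ) < (γ * Real.sin ε) ^ 2 := by positivity
    have hlt : (r - γ * Real.cos ε) ^ 2 < ‖z‖ ^ 2 := by linarith
    calc r - γ * Real.cos ε ≤ Real.sqrt ((r - γ * Real.cos ε) ^ 2) := by
          rw [Real.sqrt_sq_eq_abs]; exact le_abs_self _
      _ < Real.sqrt (‖z‖ ^ 2) := Real.sqrt_lt_sqrt (sq_nonneg _) hlt
      _ = _ := Real.sqrt_sq habs0.le
  have hcos : Real.cos (Real.pi - ε) < Real.cos z.arg := by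
    rw [Complex.cos_arg hz0, Real.cos_pi_sub]
    rw [lt_div_iff₀ habs0]
    have hre : z.re = γ - r * Real.cos ε := lamP_re γ ε r
    rw [hre]
    nlinarith [mul_lt_mul_of_pos_left hkey hc]
  rw [abs_of_nonneg harg0]
  by_contra hcon
  push_neg at hcon
  rcases eq_or_lt_of_le hcon with h | h
  · rw [← h] at hcos; linarith
  · have := Real.strictAntiOn_cos ⟨by linarith, by linarith⟩ ⟨harg0, hargpi⟩ h
    linarith

lemma lamM_arg_lt (hε0 : 0 < ε) (hε1 : ε < Real.pi / 2) (hγ : 0 < γ) (hr : 0 ≤ r) :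
    |Complex.arg (lamM γ ε r)| < Real.pi - ε := by
  have h := lamP_arg_lt (γ := γ) (r := r) hε0 hε1 hγ hr
  have hpi := Real.pi_pos
  have hne : (lamP γ ε r).arg ≠ Real.pi := by
    intro hcon
    rw [hcon] at h
    have : Real.pi ≤ Real.pi - ε := le_trans (le_abs_self _) h.le
    linarith
  rw [lamM_eq_conj, Complex.arg_conj, if_neg hne, abs_neg]
  exact h

lemma lamP_mem_slitPlane (hε0 : 0 < ε) (hε1 : ε < Real.pi / 2) (hγ : 0 < γ) (hr : 0 ≤ r) :
    lamP γ ε r ∈ Complex.slitPlane := by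
  have hs : 0 < Real.sin ε := Real.sin_pos_of_pos_of_lt_pi hε0 (by linarith [Real.pi_pos])
  rw [Complex.mem_slitPlane_iff]
  rcases eq_or_lt_of_le hr with h | h
  · left; rw [lamP_re, ← h]; simpa using hγ
  · right; rw [lamP_im]; positivity

lemma lamM_mem_slitPlane (hε0 : 0 < ε) (hε1 : ε < Real.pi / 2) (hγ : 0 < γ) (hr : 0 ≤ r) :
    lamM γ ε r ∈ Complex.slitPlane := by
  have hs : 0 < Real.sin ε := Real.sin_pos_of_pos_of_lt_pi hε0 (by linarith [Real.pi_pos])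
  rw [Complex.mem_slitPlane_iff]
  rcases eq_or_lt_of_le hr with h | h
  · left; rw [lamM_re, ← h]; simpa using hγ
  · right
    rw [lamM_eq_conj, Complex.conj_im, lamP_im]
    have : 0 < r * Real.sin ε := by positivity
    intro hcon
    rw [neg_eq_zero] at hcon
    linarith

lemma derivF_continuousAt [CompleteSpace X] {F : ℂ → X} {z₀ : ℂ}
    (hF : ∀ z : ℂ, z ≠ 0 → |Complex.arg z| ≤ Real.pi - ε → l₀ < ‖z‖ →
      DifferentiableAt ℂ F z)
    (hz0 : z₀ ≠ 0) (harg : |Complex.arg z₀| < Real.pi - ε) (habs : l₀ < ‖z₀‖)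
    (hslit : z₀ ∈ Complex.slitPlane) :
    ContinuousAt (deriv F) z₀ := by
  have h1 : ∀ᶠ z : ℂ in nhds z₀, |Complex.arg z| < Real.pi - ε := by
    have hc : ContinuousAt (fun z : ℂ => |Complex.arg z|) z₀ :=
      continuous_abs.continuousAt.comp (Complex.continuousAt_arg hslit)
    exact hc (Iio_mem_nhds harg)
  have h2 : ∀ᶠ z : ℂ in nhds z₀, l₀ < ‖z‖ :=
    continuous_norm.continuousAt (Ioi_mem_nhds habs)
  have h3 : ∀ᶠ z : ℂ in nhds z₀, z ≠ 0 := by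
    exact isOpen_compl_singleton.eventually_mem (by simpa using hz0)
  have hdiff : ∀ᶠ z : ℂ in nhds z₀, DifferentiableAt ℂ F z := by
    filter_upwards [h1, h2, h3] with z hz1 hz2 hz3
    exact hF z hz3 hz1.le hz2
  have hA : AnalyticAt ℂ F z₀ := Complex.analyticAt_iff_eventually_differentiableAt.2 hdiff
  have hfd : ContinuousAt (fderiv ℂ F) z₀ := hA.fderiv.continuousAt
  have heq : deriv F = fun z => fderiv ℂ F z 1 := by
    funext z; rw [← fderiv_apply_one_eq_deriv]
  rw [heq]
  exact ((ContinuousLinearMap.apply ℂ X (1:ℂ)).continuous.continuousAt).comp hfd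

end

noncomputable def sectorBoundary {X : Type*} [NormedAddCommGroup X] [NormedSpace ℂ X]
    (F : ℂ → X) (γ ε t r : ℝ) : X :=
  Complex.exp (lamP γ ε r * (t : ℂ)) • F (lamP γ ε r) -
    Complex.exp (lamM γ ε r * (t : ℂ)) • F (lamM γ ε r)

section
variable {γ ε r l₀ t : ℝ} {X : Type*} [NormedAddCommGroup X] [NormedSpace ℂ X]

lemma hasDerivAt_lamP (γ ε r : ℝ) :
    HasDerivAt (lamP γ ε) (Complex.exp (Complex.I * ((Real.pi - ε : ℝ) : ℂ))) r := by
  have h : HasDerivAt (fun x : ℝ => (x : ℂ)) 1 r := by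
    simpa using (hasDerivAt_id r).ofReal_comp
  have h2 := (h.mul_const (Complex.exp (Complex.I * ((Real.pi - ε : ℝ) : ℂ)))).const_add ((γ : ℂ))
  rw [one_mul] at h2
  exact h2

lemma hasDerivAt_lamM (γ ε r : ℝ) :
    HasDerivAt (lamM γ ε) (Complex.exp (-(Complex.I * ((Real.pi - ε : ℝ) : ℂ)))) r := by
  have h : HasDerivAt (fun x : ℝ => (x : ℂ)) 1 r := by
    simpa using (hasDerivAt_id r).ofReal_comp
  have h2 := (h.mul_const (Complex.exp (-(Complex.I * ((Real.pi - ε : ℝ) : ℂ))))).const_add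
    ((γ : ℂ))
  rw [one_mul] at h2
  exact h2

lemma hasDerivAt_sectorBoundary {F : ℂ → X}
    (hFP : DifferentiableAt ℂ F (lamP γ ε r)) (hFM : DifferentiableAt ℂ F (lamM γ ε r)) :
    HasDerivAt (sectorBoundary F γ ε t)
      ((t : ℂ) • sectorIntegrand F γ ε t r + sectorIntegrand (deriv F) γ ε t r) r := by
  set cP := Complex.exp (Complex.I * ((Real.pi - ε : ℝ) : ℂ)) with hcP
  set cM := Complex.exp (-(Complex.I * ((Real.pi - ε : ℝ) : ℂ))) with hcM
  have hP := hasDerivAt_lamP γ ε r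
  have hM := hasDerivAt_lamM γ ε r
  have hexpP : HasDerivAt (fun x : ℝ => Complex.exp (lamP γ ε x * (t : ℂ)))
      (Complex.exp (lamP γ ε r * (t : ℂ)) * (cP * (t : ℂ))) r := (hP.mul_const ((t : ℂ))).cexp
  have hexpM : HasDerivAt (fun x : ℝ => Complex.exp (lamM γ ε x * (t : ℂ)))
      (Complex.exp (lamM γ ε r * (t : ℂ)) * (cM * (t : ℂ))) r := (hM.mul_const ((t : ℂ))).cexp
  have hFP' : HasDerivAt (fun x : ℝ => F (lamP γ ε x)) (cP • deriv F (lamP γ ε r)) r :=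
    (hFP.hasDerivAt).scomp r hP
  have hFM' : HasDerivAt (fun x : ℝ => F (lamM γ ε x)) (cM • deriv F (lamM γ ε r)) r :=
    (hFM.hasDerivAt).scomp r hM
  have h := (hexpP.smul hFP').sub (hexpM.smul hFM')
  convert h using 1
  · rfl
  simp only [sectorIntegrand, ← hcP, ← hcM]
  module

end

section
variable {γ ε r l₀ t : ℝ} {X : Type*} [NormedAddCommGroup X] [NormedSpace ℂ X]

lemma lamP_zero (γ ε : ℝ) : lamP γ ε 0 = (γ : ℂ) := by simp [lamP]

lemma lamM_zero (γ ε : ℝ) : lamM γ ε 0 = (γ : ℂ) := by simp [lamM]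

lemma sectorBoundary_zero (F : ℂ → X) (γ ε t : ℝ) : sectorBoundary F γ ε t 0 = 0 := by
  simp [sectorBoundary, lamP_zero, lamM_zero]

lemma sectorBoundary_norm_le {F : ℂ → X} {a N : ℝ}
    (hε0 : 0 < ε) (hε1 : ε < Real.pi / 2) (ha : 0 < a) (hN : 0 ≤ N) (hγ : 0 < γ)
    (hl : l₀ < γ * Real.sin ε)
    (hbd : ∀ z : ℂ, z ≠ 0 → |Complex.arg z| ≤ Real.pi - ε → l₀ < ‖z‖ →
      ‖F z‖ ≤ N * ‖z‖ ^ (-a))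
    (hr : 0 < r) :
    ‖sectorBoundary F γ ε t r‖ ≤
      2 * N * Real.sin ε ^ (-a) * Real.exp (γ * t) *
        (r ^ (-a) * Real.exp (-(Real.cos ε * t) * r)) := by
  have hP := norm_along_lamP hε0 hε1 ha hN hγ hl hbd hr
  have hM := norm_along_lamM hε0 hε1 ha hN hγ hl hbd hr
  have hsplit : Real.exp ((γ - r * Real.cos ε) * t) =
      Real.exp (γ * t) * Real.exp (-(Real.cos ε * t) * r) := by
    rw [← Real.exp_add]; ring_nf
  calc ‖sectorBoundary F γ ε t r‖
      ≤ ‖Complex.exp (lamP γ ε r * (t : ℂ)) • F (lamP γ ε r)‖ +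
        ‖Complex.exp (lamM γ ε r * (t : ℂ)) • F (lamM γ ε r)‖ := norm_sub_le _ _
    _ ≤ Real.exp ((γ - r * Real.cos ε) * t) * (N * Real.sin ε ^ (-a) * r ^ (-a)) +
        Real.exp ((γ - r * Real.cos ε) * t) * (N * Real.sin ε ^ (-a) * r ^ (-a)) := by
        gcongr
        · rw [norm_smul, norm_exp_lamP]
          exact mul_le_mul_of_nonneg_left hP (Real.exp_nonneg _)
        · rw [norm_smul, norm_exp_lamM]
          exact mul_le_mul_of_nonneg_left hM (Real.exp_nonneg _)
    _ = _ := by rw [hsplit]; ring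

lemma sectorBoundary_tendsto {F : ℂ → X} {a N : ℝ}
    (hε0 : 0 < ε) (hε1 : ε < Real.pi / 2) (ha : 0 < a) (hN : 0 ≤ N) (hγ : 0 < γ)
    (hl : l₀ < γ * Real.sin ε) (ht : 0 < t)
    (hbd : ∀ z : ℂ, z ≠ 0 → |Complex.arg z| ≤ Real.pi - ε → l₀ < ‖z‖ →
      ‖F z‖ ≤ N * ‖z‖ ^ (-a)) :
    Filter.Tendsto (sectorBoundary F γ ε t) Filter.atTop (nhds 0) := by
  have hc : 0 < Real.cos ε := Real.cos_pos_of_mem_Ioo ⟨by linarith [Real.pi_pos], hε1⟩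
  have hct : 0 < Real.cos ε * t := mul_pos hc ht
  have l1 : Filter.Tendsto (fun x : ℝ => x ^ (-a)) Filter.atTop (nhds 0) :=
    tendsto_rpow_neg_atTop ha
  have l2 : Filter.Tendsto (fun x : ℝ => Real.exp (-(Real.cos ε * t) * x))
      Filter.atTop (nhds 0) := by
    have h3 : Filter.Tendsto (fun x : ℝ => Real.cos ε * t * x) Filter.atTop Filter.atTop :=
      Filter.Tendsto.const_mul_atTop hct Filter.tendsto_id
    have h4 := Real.tendsto_exp_neg_atTop_nhds_zero.comp h3
    refine h4.congr fun x => ?_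
    simp [Function.comp, neg_mul]
  have lmul : Filter.Tendsto
      (fun x : ℝ => 2 * N * Real.sin ε ^ (-a) * Real.exp (γ * t) *
        (x ^ (-a) * Real.exp (-(Real.cos ε * t) * x))) Filter.atTop (nhds 0) := by
    have := (l1.mul l2).const_mul (2 * N * Real.sin ε ^ (-a) * Real.exp (γ * t))
    simpa using this
  refine squeeze_zero_norm' ?_ lmul
  filter_upwards [Filter.eventually_gt_atTop 0] with x hx
  exact sectorBoundary_norm_le hε0 hε1 ha hN hγ hl hbd hx

lemma sectorBoundary_continuousOn {F : ℂ → X}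
    (hG : ∀ r ∈ Ici (0:ℝ), ContinuousAt F (lamP γ ε r) ∧ ContinuousAt F (lamM γ ε r)) :
    ContinuousOn (sectorBoundary F γ ε t) (Ici 0) := by
  intro r hr
  apply ContinuousAt.continuousWithinAt
  have h1 : ContinuousAt (fun x : ℝ => Complex.exp (lamP γ ε x * (t : ℂ))) r :=
    (Complex.continuous_exp.comp ((continuous_lamP γ ε).mul continuous_const)).continuousAt
  have h2 : ContinuousAt (fun x : ℝ => Complex.exp (lamM γ ε x * (t : ℂ))) r :=
    (Complex.continuous_exp.comp ((continuous_lamM γ ε).mul continuous_const)).continuousAt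
  have hGP : ContinuousAt (fun x : ℝ => F (lamP γ ε x)) r :=
    (hG r hr).1.comp (continuous_lamP γ ε).continuousAt
  have hGM : ContinuousAt (fun x : ℝ => F (lamM γ ε x)) r :=
    (hG r hr).2.comp (continuous_lamM γ ε).continuousAt
  exact (h1.smul hGP).sub (h2.smul hGM)

end

section
variable {γ ε l₀ t σ : ℝ} {X : Type*} [NormedAddCommGroup X] [NormedSpace ℂ X] [CompleteSpace X]

lemma F_contPair (hε0 : 0 < ε) (hε1 : ε < Real.pi / 2) (hγ : 0 < γ) (hl : l₀ < γ * Real.sin ε)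
    {F : ℂ → X}
    (hF : ∀ z : ℂ, z ≠ 0 → |Complex.arg z| ≤ Real.pi - ε → l₀ < ‖z‖ →
      DifferentiableAt ℂ F z) :
    ∀ r ∈ Ici (0:ℝ), ContinuousAt F (lamP γ ε r) ∧ ContinuousAt F (lamM γ ε r) := by
  intro r hr
  have habs : l₀ < ‖lamP γ ε r‖ :=
    lt_of_lt_of_le hl (lamP_abs_ge_gamma hε0 hε1 hγ hr)
  exact ⟨(hF _ (lamP_ne_zero hε0 hε1 hγ hr) (lamP_arg hε0 hε1 hγ hr) habs).continuousAt,
    (hF _ (lamM_ne_zero hε0 hε1 hγ hr) (lamM_arg hε0 hε1 hγ hr)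
      (by rwa [lamM_abs])).continuousAt⟩

lemma derivF_contPair (hε0 : 0 < ε) (hε1 : ε < Real.pi / 2) (hγ : 0 < γ)
    (hl : l₀ < γ * Real.sin ε) {F : ℂ → X}
    (hF : ∀ z : ℂ, z ≠ 0 → |Complex.arg z| ≤ Real.pi - ε → l₀ < ‖z‖ →
      DifferentiableAt ℂ F z) :
    ∀ r ∈ Ici (0:ℝ), ContinuousAt (deriv F) (lamP γ ε r) ∧
      ContinuousAt (deriv F) (lamM γ ε r) := by
  intro r hr
  have habs : l₀ < ‖lamP γ ε r‖ :=
    lt_of_lt_of_le hl (lamP_abs_ge_gamma hε0 hε1 hγ hr)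
  constructor
  · exact derivF_continuousAt hF (lamP_ne_zero hε0 hε1 hγ hr) (lamP_arg_lt hε0 hε1 hγ hr) habs
      (lamP_mem_slitPlane hε0 hε1 hγ hr)
  · exact derivF_continuousAt hF (lamM_ne_zero hε0 hε1 hγ hr) (lamM_arg_lt hε0 hε1 hγ hr)
      (by rwa [lamM_abs]) (lamM_mem_slitPlane hε0 hε1 hγ hr)

lemma sectorIntegral_parts {F : ℂ → X} {Np Nm : ℝ}
    (hε0 : 0 < ε) (hε1 : ε < Real.pi / 2) (hσ0 : 0 < σ) (hσ2 : σ < 2)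
    (hNp : 0 ≤ Np) (hNm : 0 ≤ Nm)
    (hF : ∀ z : ℂ, z ≠ 0 → |Complex.arg z| ≤ Real.pi - ε → l₀ < ‖z‖ →
      DifferentiableAt ℂ F z)
    (hFb : ∀ z : ℂ, z ≠ 0 → |Complex.arg z| ≤ Real.pi - ε → l₀ < ‖z‖ →
      ‖F z‖ ≤ Np * ‖z‖ ^ (-(σ / 2)))
    (hFd : ∀ z : ℂ, z ≠ 0 → |Complex.arg z| ≤ Real.pi - ε → l₀ < ‖z‖ →
      ‖deriv F z‖ ≤ Nm * ‖z‖ ^ (-(1 - σ / 2)))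
    (hγ : 0 < γ) (hl : l₀ < γ * Real.sin ε) (ht : 0 < t) :
    (∫ r in Ioi (0:ℝ), sectorIntegrand F γ ε t r) =
      (-(t:ℂ)⁻¹) • ∫ r in Ioi (0:ℝ), sectorIntegrand (deriv F) γ ε t r := by
  have contF := F_contPair hε0 hε1 hγ hl hF
  have contD := derivF_contPair hε0 hε1 hγ hl hF
  have hint1 : IntegrableOn (sectorIntegrand F γ ε t) (Ioi 0) :=
    sectorIntegrand_integrableOn hε0 hε1 (by linarith : (0:ℝ) < σ / 2)
      (by linarith : σ / 2 < 1) hNp hγ hl ht contF hFb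
  have hint2 : IntegrableOn (sectorIntegrand (deriv F) γ ε t) (Ioi 0) :=
    sectorIntegrand_integrableOn hε0 hε1 (by linarith : (0:ℝ) < 1 - σ / 2)
      (by linarith : 1 - σ / 2 < 1) hNm hγ hl ht contD hFd
  have hderiv : ∀ x ∈ Ioi (0:ℝ), HasDerivAt (sectorBoundary F γ ε t)
      ((t : ℂ) • sectorIntegrand F γ ε t x + sectorIntegrand (deriv F) γ ε t x) x := by
    intro x hx
    have hx0 : (0:ℝ) ≤ x := (mem_Ioi.1 hx).le
    have habs : l₀ < ‖lamP γ ε x‖ :=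
      lt_of_lt_of_le hl (lamP_abs_ge_gamma hε0 hε1 hγ hx0)
    exact hasDerivAt_sectorBoundary
      (hF _ (lamP_ne_zero hε0 hε1 hγ hx0) (lamP_arg hε0 hε1 hγ hx0) habs)
      (hF _ (lamM_ne_zero hε0 hε1 hγ hx0) (lamM_arg hε0 hε1 hγ hx0) (by rwa [lamM_abs]))
  have hf'int : IntegrableOn (fun x : ℝ =>
      (t : ℂ) • sectorIntegrand F γ ε t x + sectorIntegrand (deriv F) γ ε t x) (Ioi 0) :=
    (hint1.smul ((t : ℂ))).add hint2
  have hcont : ContinuousWithinAt (sectorBoundary F γ ε t) (Ici 0) 0 :=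
    sectorBoundary_continuousOn contF 0 self_mem_Ici
  have htend : Filter.Tendsto (sectorBoundary F γ ε t) Filter.atTop (nhds 0) :=
    sectorBoundary_tendsto hε0 hε1 (by linarith : (0:ℝ) < σ / 2) hNp hγ hl ht hFb
  have heq := integral_Ioi_of_hasDerivAt_of_tendsto hcont hderiv hf'int htend
  rw [sectorBoundary_zero, sub_zero] at heq
  have hsm : Integrable (fun x : ℝ => (t : ℂ) • sectorIntegrand F γ ε t x)
      (volume.restrict (Ioi 0)) := hint1.smul ((t : ℂ))
  rw [integral_add hsm hint2, integral_smul] at heq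
  have htne : (t : ℂ) ≠ 0 := by exact_mod_cast ht.ne'
  have hkey : (t : ℂ) • (∫ r in Ioi (0:ℝ), sectorIntegrand F γ ε t r) =
      -(∫ r in Ioi (0:ℝ), sectorIntegrand (deriv F) γ ε t r) :=
    eq_neg_of_add_eq_zero_left heq
  calc (∫ r in Ioi (0:ℝ), sectorIntegrand F γ ε t r)
      = (t : ℂ)⁻¹ • ((t : ℂ) • ∫ r in Ioi (0:ℝ), sectorIntegrand F γ ε t r) :=
        (inv_smul_smul₀ htne _).symm
    _ = (t : ℂ)⁻¹ • (-(∫ r in Ioi (0:ℝ), sectorIntegrand (deriv F) γ ε t r)) := by rw [hkey]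
    _ = (-(t:ℂ)⁻¹) • ∫ r in Ioi (0:ℝ), sectorIntegrand (deriv F) γ ε t r := by
        rw [smul_neg, neg_smul]

end

lemma norm_pref : ‖(2 * (Real.pi : ℂ) * Complex.I)⁻¹‖ = (2 * Real.pi)⁻¹ := by
  rw [norm_inv]
  simp [Complex.norm_real,
    abs_of_pos Real.pi_pos]


/-- pointwise-in-time decay estimates `‖I(t)‖ ≲ e^{γt} t^{−(1∓σ/2)}` for the
inverse Laplace transform on the shifted sector contour. -/
theorem pointwise_decay_of_sector_inverse_laplace
    (X : Type*) [NormedAddCommGroup X] [NormedSpace ℂ X] [CompleteSpace X]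
    (ε σ : ℝ) (hε0 : 0 < ε) (hε1 : ε < Real.pi / 2) (hσ0 : 0 < σ) (hσ2 : σ < 2) :
    (∃ C₁ : ℝ, 0 < C₁ ∧
      ∀ l₀ Np : ℝ, 0 < l₀ → 0 ≤ Np → ∀ F : ℂ → X,
        (∀ z : ℂ, z ≠ 0 → |Complex.arg z| ≤ Real.pi - ε → l₀ < ‖z‖ →
          DifferentiableAt ℂ F z) →
        (∀ z : ℂ, z ≠ 0 → |Complex.arg z| ≤ Real.pi - ε → l₀ < ‖z‖ →
          ‖F z‖ ≤ Np * ‖z‖ ^ (-(σ / 2))) →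
        ∀ γ : ℝ, 0 < γ → l₀ < γ * Real.sin ε → ∀ t : ℝ, 0 < t →
          ‖sectorInvLaplace F γ ε t‖ ≤
            C₁ * Np * Real.exp (γ * t) * t ^ (-(1 - σ / 2))) ∧
    (∃ C₂ : ℝ, 0 < C₂ ∧
      ∀ l₀ Np Nm : ℝ, 0 < l₀ → 0 ≤ Np → 0 ≤ Nm → ∀ F : ℂ → X,
        (∀ z : ℂ, z ≠ 0 → |Complex.arg z| ≤ Real.pi - ε → l₀ < ‖z‖ →
          DifferentiableAt ℂ F z) →
        (∀ z : ℂ, z ≠ 0 → |Complex.arg z| ≤ Real.pi - ε → l₀ < ‖z‖ →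
          ‖F z‖ ≤ Np * ‖z‖ ^ (-(σ / 2))) →
        (∀ z : ℂ, z ≠ 0 → |Complex.arg z| ≤ Real.pi - ε → l₀ < ‖z‖ →
          ‖deriv F z‖ ≤ Nm * ‖z‖ ^ (-(1 - σ / 2))) →
        ∀ γ : ℝ, 0 < γ → l₀ < γ * Real.sin ε → ∀ t : ℝ, 0 < t →
          ‖sectorInvLaplace F γ ε t‖ ≤
            C₂ * Nm * Real.exp (γ * t) * t ^ (-(1 + σ / 2))) := by

  have hpi := Real.pi_pos
  have hc : 0 < Real.cos ε := Real.cos_pos_of_mem_Ioo ⟨by linarith, hε1⟩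
  have hs : 0 < Real.sin ε := Real.sin_pos_of_pos_of_lt_pi hε0 (by linarith)
  constructor
  · refine ⟨Real.pi⁻¹ * Real.sin ε ^ (-(σ / 2)) * Real.cos ε ^ (σ / 2 - 1) *
      Real.Gamma (1 - σ / 2), ?_, ?_⟩
    · have hΓ : 0 < Real.Gamma (1 - σ / 2) := Real.Gamma_pos_of_pos (by linarith)
      have h1 : 0 < Real.sin ε ^ (-(σ / 2)) := Real.rpow_pos_of_pos hs _
      have h2 : 0 < Real.cos ε ^ (σ / 2 - 1) := Real.rpow_pos_of_pos hc _
      positivity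
    · intro l₀ Np hl0 hNp F hF hFb γ hγ hl t ht
      have contF := F_contPair hε0 hε1 hγ hl hF
      have hB := sectorIntegral_norm_le (a := σ / 2) hε0 hε1 (by linarith) (by linarith)
        hNp hγ hl ht contF hFb
      rw [sectorInvLaplace, norm_smul, norm_pref]
      calc (2 * Real.pi)⁻¹ * ‖∫ r in Set.Ioi (0:ℝ), sectorIntegrand F γ ε t r‖
          ≤ (2 * Real.pi)⁻¹ * (2 * Np * Real.sin ε ^ (-(σ / 2)) * Real.exp (γ * t) *
            ((Real.cos ε * t) ^ (σ / 2 - 1) * Real.Gamma (1 - σ / 2))) := by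
            exact mul_le_mul_of_nonneg_left hB (by positivity)
        _ = Real.pi⁻¹ * Real.sin ε ^ (-(σ / 2)) * Real.cos ε ^ (σ / 2 - 1) *
            Real.Gamma (1 - σ / 2) * Np * Real.exp (γ * t) * t ^ (-(1 - σ / 2)) := by
            rw [Real.mul_rpow hc.le ht.le, show -(1 - σ / 2) = σ / 2 - 1 by ring]
            field_simp
  · refine ⟨Real.pi⁻¹ * Real.sin ε ^ (σ / 2 - 1) * Real.cos ε ^ (-(σ / 2)) *
      Real.Gamma (σ / 2), ?_, ?_⟩
    · have hΓ : 0 < Real.Gamma (σ / 2) := Real.Gamma_pos_of_pos (by linarith)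
      have h1 : 0 < Real.sin ε ^ (σ / 2 - 1) := Real.rpow_pos_of_pos hs _
      have h2 : 0 < Real.cos ε ^ (-(σ / 2)) := Real.rpow_pos_of_pos hc _
      positivity
    · intro l₀ Np Nm hl0 hNp hNm F hF hFb hFd γ hγ hl t ht
      have contD := derivF_contPair hε0 hε1 hγ hl hF
      have hparts := sectorIntegral_parts hε0 hε1 hσ0 hσ2 hNp hNm hF hFb hFd hγ hl ht
      have hB := sectorIntegral_norm_le (a := 1 - σ / 2) hε0 hε1 (by linarith) (by linarith)
        hNm hγ hl ht contD hFd
      rw [sectorInvLaplace, norm_smul, norm_pref, hparts, norm_smul]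
      have hnrm : ‖(-(t:ℂ)⁻¹)‖ = t⁻¹ := by
        rw [norm_neg, norm_inv, Complex.norm_real, Real.norm_eq_abs, abs_of_pos ht]
      rw [hnrm]
      calc (2 * Real.pi)⁻¹ *
            (t⁻¹ * ‖∫ r in Set.Ioi (0:ℝ), sectorIntegrand (deriv F) γ ε t r‖)
          ≤ (2 * Real.pi)⁻¹ * (t⁻¹ * (2 * Nm * Real.sin ε ^ (-(1 - σ / 2)) *
              Real.exp (γ * t) *
              ((Real.cos ε * t) ^ (1 - σ / 2 - 1) * Real.Gamma (1 - (1 - σ / 2))))) := by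
            exact mul_le_mul_of_nonneg_left
              (mul_le_mul_of_nonneg_left hB (by positivity)) (by positivity)
        _ = Real.pi⁻¹ * Real.sin ε ^ (σ / 2 - 1) * Real.cos ε ^ (-(σ / 2)) *
            Real.Gamma (σ / 2) * Nm * Real.exp (γ * t) * t ^ (-(1 + σ / 2)) := by
            rw [show (1 - σ / 2 - 1 : ℝ) = -(σ / 2) by ring,
              show (1 - (1 - σ / 2) : ℝ) = σ / 2 by ring,
              show (-(1 - σ / 2) : ℝ) = σ / 2 - 1 by ring,
              Real.mul_rpow hc.le ht.le]
            have hts : t⁻¹ * t ^ (-(σ / 2)) = t ^ (-(1 + σ / 2)) := by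
              rw [← Real.rpow_neg_one t, ← Real.rpow_add ht,
                show (-1 + -(σ / 2) : ℝ) = -(1 + σ / 2) by ring]
            rw [← hts]
            field_simp
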